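/- For ε > 0 and any continuous 2π-periodic function f, the convolution (A_ε * f)(x) = ∑_{j ∈ ℤ} \hat{f}(j) e^{ijx} / cosh(εj) (where \hat{f}(j) are the Fourier coefficients of f) extends to a function holomorphic in the strip {z ∈ ℂ : |Im z| < ε}; in particular A_ε * f is real-analytic on ℝ. -/

import Mathlib

/-!
Since `1 / cosh (εj) ≤ 2 e^{-ε|j|}` and `|e^{ijz}| = e^{-j Im z}`, the series
`∑ ĉ_j e^{ijz} / cosh (εj)` with bounded coefficients `ĉ_j` is dominated on each strip
`|Im z| ≤ δ < ε` by the summable `e^{-(ε-δ)|j|}`, so by the Weierstrass M-test it is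
holomorphic on `|Im z| < ε`. On the real line the same bound dominates the series of `A_ε`,
which can therefore be integrated against `f` term by term: this gives the Fourier expansion
of `A_ε * f`.
-/

open Real

/-- The kernel `A_ε(x) = (1/(2π)) ∑_{j ∈ ℤ} e^{ijx}/cosh(εj)`. -/
noncomputable def Aker (ε x : ℝ) : ℂ :=
  (1/(2*π : ℂ)) * ∑' j : ℤ, Complex.exp (Complex.I * j * x) / (Real.cosh (ε * j) : ℂ)

open Complex MeasureTheory

theorem Real.inv_cosh_le_two_mul_exp_neg_abs (x : ℝ) :
    (Real.cosh x)⁻¹ ≤ 2 * Real.exp (-|x|) := by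
  rw [inv_le_comm₀ (Real.cosh_pos x) (by positivity), Real.exp_neg, mul_inv, inv_inv]
  have := Real.exp_abs_le x
  rw [Real.cosh_eq]
  linarith

theorem summable_exp_neg_mul_abs_int {r : ℝ} (hr : 0 < r) :
    Summable fun j : ℤ => Real.exp (-(r * |(j : ℝ)|)) := by
  have hnat : Summable fun n : ℕ => Real.exp (n * -r) :=
    Real.summable_exp_nat_mul_iff.mpr (neg_lt_zero.mpr hr)
  refine .of_nat_of_neg ?_ ?_ <;> refine hnat.congr fun n => ?_ <;> simp [mul_comm]

theorem norm_exp_I_mul_int_mul (j : ℤ) (z : ℂ) :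
    ‖exp (I * j * z)‖ = Real.exp (-(j * z.im)) := by
  simp [Complex.norm_exp, Complex.mul_re, Complex.mul_im]

/-- The `j`-th term `e^{ijz} / cosh(εj)` of the series defining `A_ε`. -/
noncomputable def coshTerm (ε : ℝ) (j : ℤ) (z : ℂ) : ℂ :=
  exp (I * j * z) / (Real.cosh (ε * j) : ℂ)

theorem norm_coshTerm_le {ε δ : ℝ} {z : ℂ} (hz : |z.im| ≤ δ) (j : ℤ) :
    ‖coshTerm ε j z‖ ≤ 2 * Real.exp (-((ε - δ) * |(j : ℝ)|)) := by
  rw [coshTerm, norm_div, norm_exp_I_mul_int_mul, Complex.norm_real, Real.norm_of_nonneg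
    (Real.cosh_pos _).le, div_eq_mul_inv]
  have hgrowth : -(j * z.im) ≤ δ * |(j : ℝ)| := by
    calc -(j * z.im) ≤ |(j : ℝ)| * |z.im| := by rw [← abs_mul]; exact neg_le_abs _
      _ ≤ δ * |(j : ℝ)| := by rw [mul_comm]; gcongr
  have hdecay : ε * |(j : ℝ)| ≤ |ε * j| := by rw [abs_mul]; gcongr; exact le_abs_self ε
  calc Real.exp (-(j * z.im)) * (Real.cosh (ε * j))⁻¹
      ≤ Real.exp (δ * |(j : ℝ)|) * (2 * Real.exp (-(ε * |(j : ℝ)|))) := by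
        gcongr
        exact (Real.inv_cosh_le_two_mul_exp_neg_abs _).trans (by gcongr)
    _ = 2 * Real.exp (-((ε - δ) * |(j : ℝ)|)) := by
        rw [mul_left_comm, ← Real.exp_add]; ring_nf

theorem isOpen_abs_im_lt (ε : ℝ) : IsOpen {z : ℂ | |z.im| < ε} :=
  isOpen_lt (continuous_abs.comp continuous_im) continuous_const

theorem differentiableOn_tsum_mul_coshTerm {ε K : ℝ} {c : ℤ → ℂ} (hc : ∀ j, ‖c j‖ ≤ K) :
    DifferentiableOn ℂ (fun z => ∑' j, c j * coshTerm ε j z) {z : ℂ | |z.im| < ε} := by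
  intro z₀ hz₀
  obtain ⟨δ, hz₀δ, hδε⟩ := exists_between (show |z₀.im| < ε from hz₀)
  have hdiff :
      DifferentiableOn ℂ (fun z => ∑' j, c j * coshTerm ε j z) {z : ℂ | |z.im| < δ} := by
    refine Complex.differentiableOn_tsum_of_summable_norm
      ((summable_exp_neg_mul_abs_int (sub_pos.mpr hδε)).mul_left (K * 2))
      (fun j => ?_) (isOpen_abs_im_lt δ) fun j w hw => ?_
    · exact (Differentiable.const_mul (by unfold coshTerm; fun_prop) _).differentiableOn
    · rw [norm_mul, mul_assoc]
      exact mul_le_mul (hc j) (norm_coshTerm_le (le_of_lt hw) j) (norm_nonneg _)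
        ((norm_nonneg _).trans (hc j))
  exact (hdiff.differentiableAt ((isOpen_abs_im_lt δ).mem_nhds hz₀δ)).differentiableWithinAt

noncomputable def fourierCoeffTwoPi (g : ℝ → ℂ) (j : ℤ) : ℂ :=
  (1 / (2 * π : ℂ)) * ∫ t in (0 : ℝ)..(2 * π), g t * exp (-I * j * t)

theorem norm_one_div_two_pi : ‖(1 / (2 * π : ℂ))‖ = (2 * π)⁻¹ := by
  rw [one_div, norm_inv, norm_mul, Complex.norm_real, Real.norm_of_nonneg pi_pos.le]
  norm_num

theorem norm_fourierCoeffTwoPi_le (g : ℝ → ℂ) (j : ℤ) :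
    ‖fourierCoeffTwoPi g j‖ ≤ (2 * π)⁻¹ * ∫ t in (0 : ℝ)..(2 * π), ‖g t‖ := by
  rw [fourierCoeffTwoPi, norm_mul, norm_one_div_two_pi]
  gcongr
  refine (intervalIntegral.norm_integral_le_integral_norm (by positivity)).trans_eq
    (intervalIntegral.integral_congr fun t _ => ?_)
  rw [norm_mul, Complex.norm_exp]
  simp [Complex.mul_re]

theorem coshTerm_ofReal_sub (ε : ℝ) (j : ℤ) (x t : ℝ) :
    coshTerm ε j ↑(x - t) = coshTerm ε j x * exp (-I * j * t) := by
  rw [coshTerm, coshTerm, div_mul_eq_mul_div, ← Complex.exp_add]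
  push_cast
  ring_nf

theorem integral_coshTerm_sub_mul (ε : ℝ) (g : ℝ → ℂ) (j : ℤ) (x : ℝ) :
    ∫ t in (0 : ℝ)..(2 * π), 1 / (2 * π : ℂ) * coshTerm ε j ↑(x - t) * g t =
      fourierCoeffTwoPi g j * coshTerm ε j x := by
  have hintegrand (t : ℝ) : 1 / (2 * π : ℂ) * coshTerm ε j ↑(x - t) * g t =
      1 / (2 * π : ℂ) * coshTerm ε j x * (g t * exp (-I * j * t)) := by
    rw [coshTerm_ofReal_sub]; ring
  simp_rw [hintegrand, intervalIntegral.integral_const_mul, fourierCoeffTwoPi]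
  ring

theorem integral_Aker_sub_mul {ε : ℝ} (hε : 0 < ε) {g : ℝ → ℂ} (hg : Continuous g) (x : ℝ) :
    ∫ t in (0 : ℝ)..(2 * π), Aker ε (x - t) * g t =
      ∑' j, fourierCoeffTwoPi g j * coshTerm ε j x := by
  have hbound (j : ℤ) (y : ℝ) : ‖coshTerm ε j y‖ ≤ 2 * Real.exp (-(ε * |(j : ℝ)|)) := by
    simpa using norm_coshTerm_le (ε := ε) (z := y) (δ := 0) (by simp) j
  have hdecay := (summable_exp_neg_mul_abs_int hε).mul_left 2
  have hsum : HasSum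
      (fun j => ∫ t in (0 : ℝ)..(2 * π), 1 / (2 * π : ℂ) * coshTerm ε j ↑(x - t) * g t)
      (∫ t in (0 : ℝ)..(2 * π), Aker ε (x - t) * g t) := by
    refine intervalIntegral.hasSum_integral_of_dominated_convergence
      (fun j t => (2 * π)⁻¹ * (2 * Real.exp (-(ε * |(j : ℝ)|))) * ‖g t‖)
      (fun j => Continuous.aestronglyMeasurable ?_) (fun j => ae_of_all _ fun t _ => ?_)
      (ae_of_all _ fun t _ => ?_) ?_ (ae_of_all _ fun t _ => ?_)
    · unfold coshTerm; fun_prop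
    · rw [norm_mul, norm_mul, norm_one_div_two_pi]
      gcongr
      exact hbound j _
    · exact (hdecay.mul_left _).mul_right _
    · simp_rw [tsum_mul_right]
      exact (continuous_const.mul hg.norm).intervalIntegrable _ _
    · have hsummable : Summable fun j => coshTerm ε j ↑(x - t) :=
        .of_norm_bounded hdecay fun j => hbound j _
      exact (hsummable.hasSum.mul_left _).mul_right _
  simpa only [integral_coshTerm_sub_mul] using hsum.tsum_eq.symm

theorem stmt6_general (ε : ℝ) (hε : 0 < ε) (f : ℝ → ℝ) (hf : Continuous f) :
    (∀ x : ℝ, (∫ t in (0:ℝ)..(2*π), Aker ε (x - t) * (f t : ℂ)) =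
      ∑' j : ℤ, ((1/(2*π : ℂ)) * ∫ t in (0:ℝ)..(2*π), (f t : ℂ) * Complex.exp (-Complex.I * j * t)) *
        Complex.exp (Complex.I * j * x) / (Real.cosh (ε * j) : ℂ)) ∧
    ∃ F : ℂ → ℂ, DifferentiableOn ℂ F {z : ℂ | |z.im| < ε} ∧
      (∀ x : ℝ, F x = ∫ t in (0:ℝ)..(2*π), Aker ε (x - t) * (f t : ℂ)) ∧
      ∀ x : ℝ, AnalyticAt ℝ (fun y : ℝ => F y) x := by
  have hseries := integral_Aker_sub_mul hε (g := fun t => (f t : ℂ)) (by fun_prop)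
  have hF := differentiableOn_tsum_mul_coshTerm (ε := ε)
    (norm_fourierCoeffTwoPi_le fun t => (f t : ℂ))
  refine ⟨fun x => by simpa only [coshTerm, fourierCoeffTwoPi, mul_div_assoc] using hseries x,
    _, hF, fun x => (hseries x).symm, fun x => ?_⟩
  have hx : (x : ℂ) ∈ {z : ℂ | |z.im| < ε} := by simpa using hε
  exact ((hF.analyticAt ((isOpen_abs_im_lt ε).mem_nhds hx)).restrictScalars (𝕜 := ℝ)).comp
    (ofRealCLM.analyticAt x)

theorem stmt6 (ε : ℝ) (hε : 0 < ε) (f : ℝ → ℝ) (hf : Continuous f)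
    (hfp : Function.Periodic f (2*π)) :
    (∀ x : ℝ, (∫ t in (0:ℝ)..(2*π), Aker ε (x - t) * (f t : ℂ)) =
      ∑' j : ℤ, ((1/(2*π : ℂ)) * ∫ t in (0:ℝ)..(2*π), (f t : ℂ) * Complex.exp (-Complex.I * j * t)) *
        Complex.exp (Complex.I * j * x) / (Real.cosh (ε * j) : ℂ)) ∧
    ∃ F : ℂ → ℂ, DifferentiableOn ℂ F {z : ℂ | |z.im| < ε} ∧
      (∀ x : ℝ, F x = ∫ t in (0:ℝ)..(2*π), Aker ε (x - t) * (f t : ℂ)) ∧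
      ∀ x : ℝ, AnalyticAt ℝ (fun y : ℝ => F y) x :=
  stmt6_general ε hε f hf
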